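/- Let x ∈ Ω, τ > 0, Δ > 0 with τ√n ≤ Δ, and let A be the forward finite-difference Jacobian approximation of F at x with stepsize τ. Then for every d ∈ ℝⁿ with ‖d‖_p ≤ Δ and x + d ∈ Ω, one has h(F(x+d)) − h(F(x) + Ad) ≤ L_{h,p} L_J c_{p,2}(m) c_{2,p}(n)² Δ². -/

import Mathlib

/-!
Each column of the finite-difference matrix `A` is a `τ⁻¹`-scaled first-order Taylor remainder of
`F` along a coordinate direction, so the Lipschitz continuity of `J_F` puts every column of
`A - J_F(x)` within `L_J τ / 2` of zero in the Euclidean norm, and applying `A - J_F(x)` to `d`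
costs at most a further factor `√n ‖d‖₂`. Adding the Taylor remainder `L_J ‖d‖₂² / 2` of `F`
itself gives `‖F(x+d) - F(x) - A d‖₂ ≤ (L_J / 2) ‖d‖₂ (‖d‖₂ + τ√n) ≤ L_J c_{2,p}(n)² Δ²`, and the
Lipschitz continuity of `h` in the `p`-norm turns this into the bound on the model error.
-/

open scoped ENNReal

noncomputable section

/-- The `p`-norm on `ℝ^n`, for `p ∈ [1,∞]`. -/
def pNorm (p : ℝ≥0∞) {n : ℕ} (x : Fin n → ℝ) : ℝ :=
  if p = ∞ then ⨆ i, |x i| else (∑ i, |x i| ^ p.toReal) ^ (1 / p.toReal)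

/-- The Euclidean norm on `ℝ^n`. -/
def eucNorm {n : ℕ} (x : Fin n → ℝ) : ℝ := Real.sqrt (∑ i, x i ^ 2)

/-- The operator norm of a matrix, induced by Euclidean norms. -/
def opNorm2 {m n : ℕ} (A : Matrix (Fin m) (Fin n) ℝ) : ℝ :=
  sSup ((fun v => eucNorm (A.mulVec v)) '' {v | eucNorm v ≤ 1})

/-- Forward finite-difference approximation of the Jacobian of `F` at `x` with stepsize `τ`:
the `j`-th column is `(F (x + τ e_j) - F x) / τ`. -/
def fdMatrix {n m : ℕ} (F : (Fin n → ℝ) → (Fin m → ℝ)) (x : Fin n → ℝ) (τ : ℝ) :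
    Matrix (Fin m) (Fin n) ℝ :=
  Matrix.of fun i j => (F (x + Pi.single j τ) i - F x i) / τ

/-- Stationarity measure `ψ_{p,r}(x)`. -/
def psi {n m : ℕ} (Ω : Set (Fin n → ℝ)) (F : (Fin n → ℝ) → (Fin m → ℝ))
    (h : (Fin m → ℝ) → ℝ) (J : (Fin n → ℝ) → Matrix (Fin m) (Fin n) ℝ)
    (p : ℝ≥0∞) (r : ℝ) (x : Fin n → ℝ) : ℝ :=
  r⁻¹ * (h (F x) -
    sInf ((fun s => h (F x + (J x).mulVec s)) '' {s | x + s ∈ Ω ∧ pNorm p s ≤ r}))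

/-- Approximate stationarity measure `η_{p,r}(x; A)`. -/
def eta {n m : ℕ} (Ω : Set (Fin n → ℝ)) (F : (Fin n → ℝ) → (Fin m → ℝ))
    (h : (Fin m → ℝ) → ℝ) (p : ℝ≥0∞) (r : ℝ) (x : Fin n → ℝ)
    (A : Matrix (Fin m) (Fin n) ℝ) : ℝ :=
  r⁻¹ * (h (F x) -
    sInf ((fun s => h (F x + A.mulVec s)) '' {s | x + s ∈ Ω ∧ pNorm p s ≤ r}))

open Set
open scoped Matrix

section Taylor

variable {E G : Type*} [NormedAddCommGroup E] [NormedSpace ℝ E]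
  [NormedAddCommGroup G] [NormedSpace ℝ G]

theorem norm_image_add_sub_sub_fderiv_le {f : E → G} {f' : E → E →L[ℝ] G} {L : ℝ} {x : E}
    (hf : ∀ y, HasFDerivAt f (f' y) y) (hf' : ∀ y, ‖f' y - f' x‖ ≤ L * ‖y - x‖) (v : E) :
    ‖f (x + v) - f x - f' x v‖ ≤ L / 2 * ‖v‖ ^ 2 := by
  set φ : ℝ → G := fun t => f (x + t • v) - f x - t • f' x v
  have hφ : ∀ t, HasDerivAt φ (f' (x + t • v) v - f' x v) t := by
    intro t
    have hline : HasDerivAt (fun t : ℝ => x + t • v) v t := by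
      simpa using ((hasDerivAt_id t).smul_const v).const_add x
    exact (((hf _).comp_hasDerivAt t hline).sub_const (f x)).sub
      (by simpa using (hasDerivAt_id t).smul_const (f' x v))
  have hφ' : ∀ t ∈ Ico (0 : ℝ) 1, ‖f' (x + t • v) v - f' x v‖ ≤ L * ‖v‖ ^ 2 * t := by
    intro t ht
    have hlip : ‖f' (x + t • v) - f' x‖ ≤ L * (t * ‖v‖) := by
      simpa [norm_smul, abs_of_nonneg ht.1] using hf' (x + t • v)
    calc ‖f' (x + t • v) v - f' x v‖ = ‖(f' (x + t • v) - f' x) v‖ := rfl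
      _ ≤ ‖f' (x + t • v) - f' x‖ * ‖v‖ := ContinuousLinearMap.le_opNorm _ _
      _ ≤ L * (t * ‖v‖) * ‖v‖ := mul_le_mul_of_nonneg_right hlip (norm_nonneg v)
      _ = L * ‖v‖ ^ 2 * t := by ring
  have hB : ∀ t : ℝ, HasDerivAt (fun t => L / 2 * ‖v‖ ^ 2 * t ^ 2) (L * ‖v‖ ^ 2 * t) t := by
    intro t
    exact ((hasDerivAt_pow 2 t).const_mul (L / 2 * ‖v‖ ^ 2)).congr_deriv (by ring)
  simpa [φ] using image_norm_le_of_norm_deriv_right_le_deriv_boundary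
    (fun t _ => (hφ t).continuousAt.continuousWithinAt) (fun t _ => (hφ t).hasDerivWithinAt)
    (by simp [φ]) hB hφ' (right_mem_Icc.2 zero_le_one)

end Taylor

section Euclidean

variable {n m : ℕ}

theorem eucNorm_eq_norm_toLp (v : Fin n → ℝ) : eucNorm v = ‖WithLp.toLp 2 v‖ := by
  simp [eucNorm, EuclideanSpace.norm_eq]

theorem eucNorm_nonneg (v : Fin n → ℝ) : 0 ≤ eucNorm v := Real.sqrt_nonneg _

theorem eucNorm_smul (c : ℝ) (v : Fin n → ℝ) : eucNorm (c • v) = |c| * eucNorm v := by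
  rw [eucNorm_eq_norm_toLp, eucNorm_eq_norm_toLp, WithLp.toLp_smul, norm_smul, Real.norm_eq_abs]

theorem eucNorm_single (j : Fin n) (c : ℝ) : eucNorm (Pi.single j c) = |c| := by
  rw [eucNorm_eq_norm_toLp, PiLp.toLp_single, PiLp.norm_single, Real.norm_eq_abs]

theorem opNorm2_eq_norm_toEuclideanLin (A : Matrix (Fin m) (Fin n) ℝ) :
    opNorm2 A = ‖LinearMap.toContinuousLinearMap (Matrix.toEuclideanLin A)‖ := by
  rw [← ContinuousLinearMap.sSup_unitClosedBall_eq_norm, opNorm2]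
  congr 1
  ext r
  constructor
  · rintro ⟨v, hv, rfl⟩
    exact ⟨WithLp.toLp 2 v, by simpa [eucNorm_eq_norm_toLp] using hv,
      by simp [eucNorm_eq_norm_toLp]⟩
  · rintro ⟨w, hw, rfl⟩
    exact ⟨WithLp.ofLp w, by simpa [eucNorm_eq_norm_toLp] using hw,
      eucNorm_eq_norm_toLp _⟩

theorem eucNorm_image_add_sub_sub_mulVec_le {F : (Fin n → ℝ) → (Fin m → ℝ)}
    {J : (Fin n → ℝ) → Matrix (Fin m) (Fin n) ℝ} {LJ : ℝ}
    (hJ : ∀ y, HasFDerivAt F (LinearMap.toContinuousLinearMap (Matrix.mulVecLin (J y))) y)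
    (hJLip : ∀ y z, opNorm2 (J y - J z) ≤ LJ * eucNorm (y - z)) (x v : Fin n → ℝ) :
    eucNorm (F (x + v) - F x - J x *ᵥ v) ≤ LJ / 2 * eucNorm v ^ 2 := by
  let eₙ := EuclideanSpace.equiv (Fin n) ℝ
  let eₘ := EuclideanSpace.equiv (Fin m) ℝ
  let g' : EuclideanSpace ℝ (Fin n) → _ := fun w =>
    LinearMap.toContinuousLinearMap (Matrix.toEuclideanLin (J (eₙ w)))
  have hg : ∀ w, HasFDerivAt (fun w => eₘ.symm (F (eₙ w))) (g' w) w := fun w =>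
    (eₘ.symm.hasFDerivAt.comp w ((hJ (eₙ w)).comp w eₙ.hasFDerivAt)).congr_fderiv
      (ContinuousLinearMap.ext fun _ => rfl)
  have hg' : ∀ w w₀, ‖g' w - g' w₀‖ ≤ LJ * ‖w - w₀‖ := fun w w₀ => by
    rw [← map_sub, ← map_sub, ← opNorm2_eq_norm_toEuclideanLin]
    exact (hJLip _ _).trans_eq (by rw [eucNorm_eq_norm_toLp]; rfl)
  rw [eucNorm_eq_norm_toLp, eucNorm_eq_norm_toLp]
  exact norm_image_add_sub_sub_fderiv_le hg (hg' · _) (WithLp.toLp 2 v)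

theorem eucNorm_mulVec_le_of_eucNorm_col_le (M : Matrix (Fin m) (Fin n) ℝ) {c : ℝ} (hc : 0 ≤ c)
    (hM : ∀ j, eucNorm (M.col j) ≤ c) (d : Fin n → ℝ) :
    eucNorm (M *ᵥ d) ≤ c * √n * eucNorm d := by
  have hsum : ∑ j, |d j| ≤ √n * eucNorm d := by
    simpa [eucNorm, sq_abs] using
      Real.sum_mul_le_sqrt_mul_sqrt Finset.univ (fun _ => (1 : ℝ)) (fun j => |d j|)
  calc eucNorm (M *ᵥ d) = ‖∑ j, d j • WithLp.toLp 2 (M.col j)‖ := by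
        rw [eucNorm_eq_norm_toLp, Matrix.mulVec_eq_sum]
        simp [WithLp.toLp_sum, Matrix.col]
    _ ≤ ∑ j, ‖d j • WithLp.toLp 2 (M.col j)‖ := norm_sum_le _ _
    _ = ∑ j, |d j| * eucNorm (M.col j) := by simp [norm_smul, eucNorm_eq_norm_toLp]
    _ ≤ ∑ j, |d j| * c := by gcongr with j; exact hM j
    _ = c * ∑ j, |d j| := by rw [Finset.mul_sum]; simp only [mul_comm]
    _ ≤ c * (√n * eucNorm d) := by gcongr
    _ = c * √n * eucNorm d := by ring

theorem col_fdMatrix_sub (F : (Fin n → ℝ) → (Fin m → ℝ)) (x : Fin n → ℝ) {τ : ℝ} (hτ : τ ≠ 0)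
    (M : Matrix (Fin m) (Fin n) ℝ) (j : Fin n) :
    (fdMatrix F x τ - M).col j = τ⁻¹ • (F (x + Pi.single j τ) - F x - M *ᵥ Pi.single j τ) := by
  ext i
  simp only [fdMatrix, Matrix.col_apply, Matrix.sub_apply, Matrix.of_apply,
    Matrix.mulVec_single, op_smul_eq_smul, Pi.smul_apply, Pi.sub_apply, smul_eq_mul]
  field_simp

section FiniteDifference

variable {F : (Fin n → ℝ) → (Fin m → ℝ)} {J : (Fin n → ℝ) → Matrix (Fin m) (Fin n) ℝ} {LJ : ℝ}
  (hJ : ∀ y, HasFDerivAt F (LinearMap.toContinuousLinearMap (Matrix.mulVecLin (J y))) y)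
  (hJLip : ∀ y z, opNorm2 (J y - J z) ≤ LJ * eucNorm (y - z))
include hJ hJLip

theorem eucNorm_col_fdMatrix_sub_le (x : Fin n → ℝ) {τ : ℝ} (hτ : 0 < τ) (j : Fin n) :
    eucNorm ((fdMatrix F x τ - J x).col j) ≤ LJ * τ / 2 := by
  have htaylor := eucNorm_image_add_sub_sub_mulVec_le hJ hJLip x (Pi.single j τ)
  rw [eucNorm_single, abs_of_pos hτ] at htaylor
  rw [col_fdMatrix_sub F x hτ.ne', eucNorm_smul, abs_inv, abs_of_pos hτ]
  calc τ⁻¹ * eucNorm (F (x + Pi.single j τ) - F x - J x *ᵥ Pi.single j τ)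
      ≤ τ⁻¹ * (LJ / 2 * τ ^ 2) := by gcongr
    _ = LJ * τ / 2 := by field_simp

theorem eucNorm_sub_fdMatrix_model_le (hLJ : 0 ≤ LJ) (x : Fin n → ℝ) {τ : ℝ} (hτ : 0 < τ)
    (d : Fin n → ℝ) :
    eucNorm (F (x + d) - (F x + fdMatrix F x τ *ᵥ d)) ≤
      LJ / 2 * eucNorm d * (eucNorm d + τ * √n) := by
  have hsplit : F (x + d) - (F x + fdMatrix F x τ *ᵥ d) =
      (F (x + d) - F x - J x *ᵥ d) - (fdMatrix F x τ - J x) *ᵥ d := by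
    rw [Matrix.sub_mulVec]; abel
  calc eucNorm (F (x + d) - (F x + fdMatrix F x τ *ᵥ d))
      ≤ eucNorm (F (x + d) - F x - J x *ᵥ d) + eucNorm ((fdMatrix F x τ - J x) *ᵥ d) := by
        rw [hsplit, eucNorm_eq_norm_toLp, eucNorm_eq_norm_toLp, eucNorm_eq_norm_toLp,
          WithLp.toLp_sub]
        exact norm_sub_le _ _
    _ ≤ LJ / 2 * eucNorm d ^ 2 + LJ * τ / 2 * √n * eucNorm d :=
        add_le_add (eucNorm_image_add_sub_sub_mulVec_le hJ hJLip x d)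
          (eucNorm_mulVec_le_of_eucNorm_col_le _ (by positivity)
            (eucNorm_col_fdMatrix_sub_le hJ hJLip x hτ) d)
    _ = LJ / 2 * eucNorm d * (eucNorm d + τ * √n) := by ring

end FiniteDifference

end Euclidean

theorem stmt7_general
    {n m : ℕ} (p : ℝ≥0∞)
    (Ω : Set (Fin n → ℝ))
    (F : (Fin n → ℝ) → (Fin m → ℝ)) (J : (Fin n → ℝ) → Matrix (Fin m) (Fin n) ℝ)
    (hJ : ∀ y, HasFDerivAt F (LinearMap.toContinuousLinearMap (Matrix.mulVecLin (J y))) y)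
    (LJ : ℝ) (hLJ : 0 < LJ)
    (hJLip : ∀ y z, opNorm2 (J y - J z) ≤ LJ * eucNorm (y - z))
    (h : (Fin m → ℝ) → ℝ)
    (Lh : ℝ) (hLh : 0 < Lh)
    (hhLip : ∀ z w, |h z - h w| ≤ Lh * pNorm p (z - w))
    (cnp cpm : ℝ) (hcnp1 : 1 ≤ cnp) (hcpm1 : 1 ≤ cpm)
    (hcnp : ∀ v : Fin n → ℝ, eucNorm v ≤ cnp * pNorm p v)
    (hcpm : ∀ z : Fin m → ℝ, pNorm p z ≤ cpm * eucNorm z)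
    (x : Fin n → ℝ) (τ Δ : ℝ) (hτ : 0 < τ)
    (hτΔ : τ * Real.sqrt n ≤ Δ) :
    ∀ d : Fin n → ℝ, pNorm p d ≤ Δ → x + d ∈ Ω →
      h (F (x + d)) - h (F x + (fdMatrix F x τ).mulVec d) ≤
        Lh * LJ * cpm * cnp ^ 2 * Δ ^ 2 := by
  intro d hd _
  have hcnp0 : 0 ≤ cnp := zero_le_one.trans hcnp1
  have hcpm0 : 0 ≤ cpm := zero_le_one.trans hcpm1
  have hΔ : 0 ≤ Δ := (mul_nonneg hτ.le (Real.sqrt_nonneg n)).trans hτΔ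
  have hd₂ : eucNorm d ≤ cnp * Δ := (hcnp d).trans (by gcongr)
  have hτn : τ * √n ≤ cnp * Δ := hτΔ.trans (le_mul_of_one_le_left hΔ hcnp1)
  have hmodel : eucNorm (F (x + d) - (F x + fdMatrix F x τ *ᵥ d)) ≤
      LJ / 2 * (cnp * Δ) * (cnp * Δ + cnp * Δ) :=
    (eucNorm_sub_fdMatrix_model_le hJ hJLip hLJ.le x hτ d).trans
      (by have := eucNorm_nonneg d; gcongr)
  calc h (F (x + d)) - h (F x + fdMatrix F x τ *ᵥ d)
      ≤ Lh * pNorm p (F (x + d) - (F x + fdMatrix F x τ *ᵥ d)) :=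
        (le_abs_self _).trans (hhLip _ _)
    _ ≤ Lh * (cpm * eucNorm (F (x + d) - (F x + fdMatrix F x τ *ᵥ d))) := by
        gcongr; exact hcpm _
    _ ≤ Lh * (cpm * (LJ / 2 * (cnp * Δ) * (cnp * Δ + cnp * Δ))) := by gcongr
    _ = Lh * LJ * cpm * cnp ^ 2 * Δ ^ 2 := by ring

/-- key estimate in Lemma 3.2: model error bound at trial points. -/
theorem stmt7
    {n m : ℕ} (hn : 1 ≤ n) (hm : 1 ≤ m) (p : ℝ≥0∞) (hp : 1 ≤ p)
    (Ω : Set (Fin n → ℝ)) (hΩne : Ω.Nonempty) (hΩcl : IsClosed Ω) (hΩcv : Convex ℝ Ω)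
    (F : (Fin n → ℝ) → (Fin m → ℝ)) (J : (Fin n → ℝ) → Matrix (Fin m) (Fin n) ℝ)
    (hJ : ∀ y, HasFDerivAt F (LinearMap.toContinuousLinearMap (Matrix.mulVecLin (J y))) y)
    (LJ : ℝ) (hLJ : 0 < LJ)
    (hJLip : ∀ y z, opNorm2 (J y - J z) ≤ LJ * eucNorm (y - z))
    (h : (Fin m → ℝ) → ℝ) (hconv : ConvexOn ℝ Set.univ h)
    (Lh : ℝ) (hLh : 0 < Lh)
    (hhLip : ∀ z w, |h z - h w| ≤ Lh * pNorm p (z - w))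
    (cnp cpm : ℝ) (hcnp1 : 1 ≤ cnp) (hcpm1 : 1 ≤ cpm)
    (hcnp : ∀ v : Fin n → ℝ, eucNorm v ≤ cnp * pNorm p v)
    (hcpm : ∀ z : Fin m → ℝ, pNorm p z ≤ cpm * eucNorm z)
    (x : Fin n → ℝ) (hx : x ∈ Ω) (τ Δ : ℝ) (hτ : 0 < τ) (hΔ : 0 < Δ)
    (hτΔ : τ * Real.sqrt n ≤ Δ) :
    ∀ d : Fin n → ℝ, pNorm p d ≤ Δ → x + d ∈ Ω →
      h (F (x + d)) - h (F x + (fdMatrix F x τ).mulVec d) ≤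
        Lh * LJ * cpm * cnp ^ 2 * Δ ^ 2 :=
  stmt7_general p Ω F J hJ LJ hLJ hJLip h Lh hLh hhLip cnp cpm hcnp1 hcpm1 hcnp hcpm x τ Δ hτ hτΔ
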